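/- Every partition can be written uniquely as a finite sequence of the operations ρ₁ and ψ₂ applied to the empty partition. -/

import Mathlib

/-- A partition, represented as its Young diagram: the weakly decreasing list of
(positive) row lengths, row `0` being the bottom (longest) row. -/
structure YDPartition where
  rows : List ℕ
  sorted : rows.Pairwise (· ≥ ·)
  pos : ∀ x ∈ rows, 0 < x

namespace YDPartition

/-- The number of boxes of the diagram. -/
def size (p : YDPartition) : ℕ := p.rows.sum

/-- The length of row `i` (zero for rows above the diagram). -/
def row (p : YDPartition) (i : ℕ) : ℕ := p.rows.getD i 0

/-- The height `k` of the first column, i.e. the number of rows. -/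
def colHeight (p : YDPartition) : ℕ := p.rows.length

/-- The length `j` of the first (bottom) row. -/
def rowLen (p : YDPartition) : ℕ := p.row 0

/-- The height of column `c` (columns indexed from `0`). -/
def colH (p : YDPartition) (c : ℕ) : ℕ :=
  ((Finset.range p.colHeight).filter (fun r => c < p.row r)).card

/-- The arm of the box in row `r` and column `c`: the number of boxes strictly
above it in its column. -/
def arm (p : YDPartition) (r c : ℕ) : ℕ :=
  ((Finset.Ioo r p.colHeight).filter (fun r' => c < p.row r')).card

/-- The leg of the box in row `r` and column `c`: the number of boxes strictly
to its right in its row. -/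
def leg (p : YDPartition) (r c : ℕ) : ℕ := p.row r - 1 - c

/-- The boxes of the diagram, as (row, column) pairs. -/
def cells (p : YDPartition) : Finset (ℕ × ℕ) :=
  (Finset.range p.colHeight ×ˢ Finset.range p.rowLen).filter (fun b => b.2 < p.row b.1)

/-- `w̃t(λ) = #{□ ∈ λ : a(□) + 1 ≡ l(□) (mod 3)}`. -/
def wtt (p : YDPartition) : ℕ :=
  (p.cells.filter (fun b => (p.arm b.1 b.2 + 1) % 3 = p.leg b.1 b.2 % 3)).card

/-- `wt(λ) = #{□ ∈ λ : l(□) > 1 and a(□) + 1 ≡ l(□) (mod 3)}`. -/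
def wt (p : YDPartition) : ℕ :=
  (p.cells.filter (fun b => 1 < p.leg b.1 b.2 ∧ (p.arm b.1 b.2 + 1) % 3 = p.leg b.1 b.2 % 3)).card

/-- A list of naturals is (the row list of) a well-defined Young diagram iff
it is weakly decreasing with positive entries. -/
def IsYD (l : List ℕ) : Prop := l.Pairwise (· ≥ ·) ∧ ∀ x ∈ l, 0 < x

instance (l : List ℕ) : Decidable (IsYD l) := by unfold IsYD; exact inferInstance

/-- The empty partition. -/
def emptyP : YDPartition := ⟨[], List.Pairwise.nil, by simp⟩

/-- The row list of `ρ₁λ`: remove the first row (length `j`), add one box to it,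
and insert the resulting `j + 1` boxes as a new first column. -/
def rho1Rows (p : YDPartition) : List ℕ :=
  (List.range (p.rowLen + 1)).map
    (fun i => p.rows.tail.getD i 0 + 1)

/-- The row list of `ψ₂λ`: remove the first column (height `k`), add two boxes
to it, and insert the resulting `k + 2` boxes as a new first row. -/
def psi2Rows (p : YDPartition) : List ℕ :=
  (p.colHeight + 2) :: (p.rows.map (· - 1)).filter (fun x => decide (0 < x))

/-- `ρ₁`, as a partially defined map: defined exactly when the new first column
(height `j + 1`) is at least as high as the rest of the diagram (height `k - 1`),
i.e. when `j ≥ k - 2`. -/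
def rho1? (p : YDPartition) : Option YDPartition :=
  if h : p.colHeight ≤ p.rowLen + 2 ∧ IsYD (rho1Rows p)
  then some ⟨rho1Rows p, h.2.1, h.2.2⟩ else none

/-- `ψ₂`, as a partially defined map: defined exactly when the result is a
well-defined Young diagram, i.e. when `j ≤ k + 3`. -/
def psi2? (p : YDPartition) : Option YDPartition :=
  if h : IsYD (psi2Rows p) then some ⟨psi2Rows p, h.1, h.2⟩ else none

/-- Apply `ρ₁` (for `a = 1`) or `ψ₂` (for `a = 2`). -/
def step (a : ℕ) (p : YDPartition) : Option YDPartition :=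
  if a = 1 then rho1? p else psi2? p

/-- Apply a `{1,2}`-word to the empty partition, the leftmost entry being the
first map applied. -/
def applyWord (w : List ℕ) : Option YDPartition :=
  w.foldlM (fun p a => step a p) emptyP

end YDPartition


namespace YDPartition




lemma getD_anti (l : List ℕ) (hs : l.Pairwise (· ≥ ·)) {i j : ℕ} (hij : i ≤ j) :
    l.getD j 0 ≤ l.getD i 0 := by
  rcases lt_or_ge j l.length with hj | hj
  · have hi : i < l.length := lt_of_le_of_lt hij hj
    rw [List.getD_eq_getElem l 0 hj, List.getD_eq_getElem l 0 hi]
    rcases eq_or_lt_of_le hij with rfl | hlt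
    · exact le_refl _
    · exact hs.rel_get_of_lt (a := ⟨i, hi⟩) (b := ⟨j, hj⟩) hlt
  · rw [List.getD_eq_default l 0 hj]
    exact Nat.zero_le _

lemma mem_le_head (l : List ℕ) (hs : l.Pairwise (· ≥ ·)) {x : ℕ} (hx : x ∈ l) :
    x ≤ l.getD 0 0 := by
  cases l with
  | nil => simp at hx
  | cons a t =>
    rcases List.mem_cons.mp hx with rfl | h
    · simp
    · simpa using List.rel_of_pairwise_cons hs h

lemma L0 (t : List ℕ) (n : ℕ) (h : t.length ≤ n) :
    (List.range n).map (fun i => t.getD i 0) = t ++ List.replicate (n - t.length) 0 := by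
  induction t generalizing n with
  | nil =>
    simp [List.map_eq_replicate_iff]
  | cons a t ih =>
    cases n with
    | zero => simp at h
    | succ n =>
      rw [List.range_succ_eq_map, List.map_cons, List.map_map]
      have : ((fun i => (a :: t).getD i 0) ∘ Nat.succ) = fun i => t.getD i 0 := by
        funext i; simp
      rw [this, ih n (by simpa using h)]
      simp

lemma L2 (t : List ℕ) (n : ℕ) (h : t.length ≤ n) (hp : ∀ x ∈ t, 0 < x) :
    ((List.range n).map (fun i => t.getD i 0)).filter (fun x => decide (0 < x)) = t := by
  rw [L0 t n h, List.filter_append, List.filter_replicate]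
  simp only [decide_eq_true_eq]
  rw [List.filter_eq_self.mpr (by intro x hx; simpa using hp x hx)]
  simp

lemma L3 (t : List ℕ) (n : ℕ) (h : t.length ≤ n) :
    ((List.range n).map (fun i => t.getD i 0)).sum = t.sum := by
  rw [L0 t n h]; simp

lemma sum_filter_pos (l : List ℕ) :
    (l.filter (fun x => decide (0 < x))).sum = l.sum := by
  induction l with
  | nil => rfl
  | cons a t ih =>
    by_cases ha : 0 < a
    · rw [List.filter_cons_of_pos (by simpa using ha)]; simp [ih]
    · rw [List.filter_cons_of_neg (by simpa using ha)]
      simp [ih, Nat.eq_zero_of_not_pos ha]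

lemma sum_map_sub_one (l : List ℕ) (hp : ∀ x ∈ l, 0 < x) :
    (l.map (· - 1)).sum + l.length = l.sum := by
  induction l with
  | nil => rfl
  | cons a t ih =>
    have ha := hp a (by simp)
    have := ih (fun x hx => hp x (by simp [hx]))
    simp only [List.map_cons, List.sum_cons, List.length_cons]
    omega

lemma core (l : List ℕ) (hs : l.Pairwise (· ≥ ·)) (hp : ∀ x ∈ l, 0 < x) :
    (List.range l.length).map
      (fun i => ((l.map (· - 1)).filter (fun x => decide (0 < x))).getD i 0 + 1) = l := by
  induction l with
  | nil => simp
  | cons a t ih =>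
    have hs' : t.Pairwise (· ≥ ·) := hs.of_cons
    have hp' : ∀ x ∈ t, 0 < x := fun x hx => hp x (by simp [hx])
    by_cases ha : 1 < a
    · have hfil : ((a :: t).map (· - 1)).filter (fun x => decide (0 < x))
          = (a - 1) :: (t.map (· - 1)).filter (fun x => decide (0 < x)) := by
        simp only [List.map_cons]
        rw [List.filter_cons_of_pos (by simp; omega)]
      rw [hfil, List.length_cons, List.range_succ_eq_map, List.map_cons, List.map_map]
      congr 1
      · simp; omega
      · have : ((fun i => ((a-1) :: (t.map (· - 1)).filter (fun x => decide (0 < x))).getD i 0 + 1) ∘ Nat.succ)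
            = fun i => ((t.map (· - 1)).filter (fun x => decide (0 < x))).getD i 0 + 1 := by
          funext i; simp
        rw [this, ih hs' hp']
    · -- a = 1, so all entries are 1
      have ha1 : a = 1 := by have := hp a (by simp); omega
      have hall : ∀ x ∈ a :: t, x = 1 := by
        intro x hx
        rcases List.mem_cons.mp hx with rfl | h
        · exact ha1
        · have h1 := List.rel_of_pairwise_cons hs h
          have := hp x hx
          omega
      have hfil : ((a :: t).map (· - 1)).filter (fun x => decide (0 < x)) = [] := by
        rw [List.filter_eq_nil_iff]
        intro x hx
        simp only [List.mem_map] at hx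
        obtain ⟨y, hy, rfl⟩ := hx
        have := hall y hy
        simp [this]
      rw [hfil]
      simp only [List.getD_nil, Nat.zero_add]
      rw [List.eq_replicate_iff.mpr ⟨rfl, hall⟩]
      simp [List.map_eq_replicate_iff]



lemma ext' {p q : YDPartition} (h : p.rows = q.rows) : p = q := by
  cases p; cases q; simp_all

lemma tail_getD (l : List ℕ) (i : ℕ) : l.tail.getD i 0 = l.getD (i + 1) 0 := by
  cases l <;> simp

lemma tail_sorted (l : List ℕ) (h : l.Pairwise (· ≥ ·)) : l.tail.Pairwise (· ≥ ·) := by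
  cases l with
  | nil => simp
  | cons a t => exact h.of_cons

lemma cons_head_tail (l : List ℕ) (h : l ≠ []) : l.getD 0 0 :: l.tail = l := by
  cases l with
  | nil => simp at h
  | cons a t => rfl

lemma sum_head_tail (l : List ℕ) : l.sum = l.getD 0 0 + l.tail.sum := by
  cases l <;> simp

lemma sum_map_add_one (m : ℕ) (g : ℕ → ℕ) :
    ((List.range m).map (fun i => g i + 1)).sum = ((List.range m).map g).sum + m := by
  induction m with
  | zero => simp
  | succ m ih => rw [List.range_succ]; simp [ih]; omega

/-- The rows of the inverse of `ρ₁`. -/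
def invRows1 (p : YDPartition) : List ℕ :=
  if p.colHeight ≤ 1 then [] else
    (p.colHeight - 1) :: (p.rows.map (· - 1)).filter (fun x => decide (0 < x))

/-- The rows of the inverse of `ψ₂`. -/
def invRows2 (p : YDPartition) : List ℕ :=
  (List.range (p.rowLen - 2)).map (fun i => p.rows.tail.getD i 0 + 1)

lemma rho1_some {q p : YDPartition} (h : rho1? q = some p) :
    p.rows = rho1Rows q ∧ q.colHeight ≤ q.rowLen + 2 := by
  by_cases hc : q.colHeight ≤ q.rowLen + 2 ∧ IsYD (rho1Rows q)
  · rw [rho1?, dif_pos hc] at h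
    cases h
    exact ⟨rfl, hc.1⟩
  · rw [rho1?, dif_neg hc] at h
    exact absurd h (by simp)

lemma psi2_some {q p : YDPartition} (h : psi2? q = some p) :
    p.rows = psi2Rows q := by
  by_cases hc : IsYD (psi2Rows q)
  · rw [psi2?, dif_pos hc] at h
    cases h
    rfl
  · rw [psi2?, dif_neg hc] at h
    exact absurd h (by simp)

lemma rho1_shape {q p : YDPartition} (h : rho1? q = some p) :
    p.rowLen ≤ p.colHeight ∧ p.size = q.size + 1 ∧ q.rows = invRows1 p := by
  obtain ⟨hrows, hdom⟩ := rho1_some h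
  have hlen : p.colHeight = q.rowLen + 1 := by
    simp [colHeight, hrows, rho1Rows]
  have hr0 : p.rowLen = q.rows.tail.getD 0 0 + 1 := by
    rw [rowLen, row, hrows, rho1Rows, List.range_succ_eq_map]
    simp
  have htail0 : q.rows.tail.getD 0 0 ≤ q.rowLen := by
    rw [tail_getD]
    exact getD_anti q.rows q.sorted (by omega)
  constructor
  · omega
  have htlen : q.rows.tail.length ≤ q.rowLen + 1 := by
    have h1 : q.rows.tail.length + 1 = q.rows.length ∨ (q.rows.length = 0 ∧ q.rows.tail.length = 0) := by
      cases q.rows <;> simp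
    have h2 : q.rows.length ≤ q.rowLen + 2 := hdom
    omega
  constructor
  · -- size
    have : p.size = ((List.range (q.rowLen + 1)).map (fun i => q.rows.tail.getD i 0)).sum
        + (q.rowLen + 1) := by
      rw [size, hrows, rho1Rows, sum_map_add_one]
    rw [this, L3 _ _ htlen]
    have := sum_head_tail q.rows
    rw [size]
    rw [show q.rows.getD 0 0 = q.rowLen from rfl] at this
    omega
  · -- q.rows = invRows1 p
    rcases hq : q.rows with _ | ⟨a, t⟩
    · have : q.rowLen = 0 := by simp [rowLen, row, hq]
      rw [invRows1, if_pos (by omega)]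
    · have ha : q.rowLen = a := by simp [rowLen, row, hq]
      have hk2 : ¬ p.colHeight ≤ 1 := by
        have : 0 < a := q.pos a (by rw [hq]; simp)
        omega
      rw [invRows1, if_neg hk2]
      have hmap : p.rows.map (· - 1) = (List.range (q.rowLen + 1)).map (fun i => q.rows.tail.getD i 0) := by
        rw [hrows, rho1Rows, List.map_map]
        congr 1
      have htpos : ∀ x ∈ t, 0 < x := fun x hx => q.pos x (by rw [hq]; simp [hx])
      have htlen' : t.length ≤ q.rowLen + 1 := by
        have h5 : q.rows.length = t.length + 1 := by rw [hq]; simp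
        have h6 : q.colHeight = q.rows.length := rfl
        have h7 : q.rows.length ≤ q.rowLen + 2 := hdom
        omega
      rw [hmap, hq]
      simp only [List.tail_cons]
      rw [L2 t _ htlen' htpos]
      congr 1
      omega

lemma psi2_shape {q p : YDPartition} (h : psi2? q = some p) :
    p.colHeight < p.rowLen ∧ p.size = q.size + 2 ∧ q.rows = invRows2 p := by
  have hrows := psi2_some h
  set gq := (q.rows.map (· - 1)).filter (fun x => decide (0 < x)) with hgq
  have hr0 : p.rowLen = q.colHeight + 2 := by
    simp [rowLen, row, hrows, psi2Rows]
  have hglen : gq.length ≤ q.colHeight := by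
    calc gq.length ≤ (q.rows.map (· - 1)).length := List.length_filter_le _ _
    _ = q.rows.length := by simp
  have hph : p.colHeight = gq.length + 1 := by
    simp [colHeight, hrows, psi2Rows, hgq]
  refine ⟨by omega, ?_, ?_⟩
  · have h1 : p.size = (q.colHeight + 2) + gq.sum := by
      simp [size, hrows, psi2Rows, hgq]
    have h2 : gq.sum = (q.rows.map (· - 1)).sum := sum_filter_pos _
    have h3 := sum_map_sub_one q.rows q.pos
    rw [size, size] at *
    rw [show q.colHeight = q.rows.length from rfl] at h1
    omega
  · rw [invRows2, hr0]
    have htail : p.rows.tail = gq := by rw [hrows, psi2Rows, hgq, List.tail_cons]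
    rw [htail]
    simp only [Nat.add_sub_cancel]
    rw [show q.colHeight = q.rows.length from rfl, hgq]
    exact (core q.rows q.sorted q.pos).symm

lemma rho1_exists (p : YDPartition) (hne : p.rows ≠ []) (hjk : p.rowLen ≤ p.colHeight) :
    ∃ q : YDPartition, rho1? q = some p := by
  have hk1 : 1 ≤ p.colHeight := by
    rw [colHeight]
    exact List.length_pos_iff.mpr hne
  by_cases hk : p.colHeight ≤ 1
  · -- p = [1], q = emptyP
    have hk' : p.colHeight = 1 := le_antisymm hk hk1
    have hrowseq : p.rows = [1] := by
      rcases hq : p.rows with _ | ⟨a, t⟩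
      · exact absurd hq hne
      · have ht : t = [] := by
          have : p.rows.length = 1 := hk'
          rw [hq] at this; simpa using this
        have ha1 : a ≤ 1 := by
          have : p.rowLen = a := by simp [rowLen, row, hq]
          omega
        have ha0 : 0 < a := p.pos a (by rw [hq]; simp)
        rw [ht]
        congr 1
        omega
    refine ⟨emptyP, ?_⟩
    have hrr : rho1Rows emptyP = p.rows := by
      rw [hrowseq]
      rfl
    have hcond : emptyP.colHeight ≤ emptyP.rowLen + 2 ∧ IsYD (rho1Rows emptyP) := by
      refine ⟨by rw [colHeight, rowLen]; simp [emptyP, row], ?_⟩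
      rw [hrr]; exact ⟨p.sorted, p.pos⟩
    rw [rho1?, dif_pos hcond]
    exact congrArg some (ext' hrr)
  · set k := p.colHeight with hkdef
    set gp := (p.rows.map (· - 1)).filter (fun x => decide (0 < x)) with hgp
    have hgp_mem : ∀ x ∈ gp, 0 < x ∧ x ≤ k - 1 := by
      intro x hx
      rw [hgp, List.mem_filter] at hx
      obtain ⟨hx1, hx2⟩ := hx
      simp only [List.mem_map] at hx1
      obtain ⟨y, hy, rfl⟩ := hx1
      have hyj : y ≤ p.rowLen := mem_le_head p.rows p.sorted hy
      simp only [decide_eq_true_eq] at hx2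
      exact ⟨hx2, by omega⟩
    have hgp_sorted : gp.Pairwise (· ≥ ·) := by
      rw [hgp]
      refine List.Pairwise.filter _ ?_
      exact List.Pairwise.map _ (fun a b hab => Nat.sub_le_sub_right hab 1) p.sorted
    have hsorted : ((k - 1) :: gp).Pairwise (· ≥ ·) := by
      refine List.pairwise_cons.mpr ⟨fun b hb => (hgp_mem b hb).2, hgp_sorted⟩
    have hpos : ∀ x ∈ (k - 1) :: gp, 0 < x := by
      intro x hx
      rcases List.mem_cons.mp hx with rfl | h
      · omega
      · exact (hgp_mem x h).1
    refine ⟨⟨(k - 1) :: gp, hsorted, hpos⟩, ?_⟩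
    set q : YDPartition := ⟨(k - 1) :: gp, hsorted, hpos⟩ with hq
    have hqr : q.rowLen = k - 1 := rfl
    have hrr : rho1Rows q = p.rows := by
      rw [rho1Rows, hqr]
      have : k - 1 + 1 = k := by omega
      rw [this]
      have ht : q.rows.tail = gp := rfl
      rw [ht, hgp, hkdef]
      rw [show p.colHeight = p.rows.length from rfl]
      exact core p.rows p.sorted p.pos
    have hglen : gp.length ≤ k := by
      calc gp.length ≤ (p.rows.map (· - 1)).length := List.length_filter_le _ _
      _ = p.rows.length := by simp
    have hcond : q.colHeight ≤ q.rowLen + 2 ∧ IsYD (rho1Rows q) := by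
      constructor
      · rw [hqr]
        have : q.colHeight = gp.length + 1 := rfl
        omega
      · rw [hrr]; exact ⟨p.sorted, p.pos⟩
    rw [rho1?, dif_pos hcond]
    exact congrArg some (ext' hrr)

lemma psi2_exists (p : YDPartition) (hne : p.rows ≠ []) (hkj : p.colHeight < p.rowLen) :
    ∃ q : YDPartition, psi2? q = some p := by
  have hk1 : 1 ≤ p.colHeight := by
    rw [colHeight]; exact List.length_pos_iff.mpr hne
  have hj2 : 2 ≤ p.rowLen := by omega
  set t := p.rows.tail with htdef
  set j := p.rowLen with hjdef
  have ht_sorted := tail_sorted p.rows p.sorted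
  have ht_pos : ∀ x ∈ t, 0 < x := fun x hx => p.pos x (List.mem_of_mem_tail hx)
  have htlen : t.length ≤ j - 2 := by
    have : t.length + 1 = p.rows.length := by
      rw [htdef]
      cases hc : p.rows with
      | nil => exact absurd hc hne
      | cons a s => simp
    have : p.colHeight = t.length + 1 := by rw [colHeight]; omega
    omega
  have hsorted : (invRows2 p).Pairwise (· ≥ ·) := by
    rw [invRows2]
    rw [List.pairwise_map]
    refine List.Pairwise.imp ?_ List.pairwise_lt_range
    intro a b hab
    have := getD_anti p.rows.tail ht_sorted (le_of_lt hab)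
    omega
  have hpos : ∀ x ∈ invRows2 p, 0 < x := by
    intro x hx
    rw [invRows2] at hx
    simp only [List.mem_map] at hx
    obtain ⟨i, _, rfl⟩ := hx
    omega
  refine ⟨⟨invRows2 p, hsorted, hpos⟩, ?_⟩
  set q : YDPartition := ⟨invRows2 p, hsorted, hpos⟩ with hq
  have hqk : q.colHeight = j - 2 := by
    rw [colHeight]
    show (invRows2 p).length = j - 2
    rw [invRows2]
    simp [hjdef]
  have hmap : q.rows.map (· - 1) = (List.range (j - 2)).map (fun i => t.getD i 0) := by
    show ((invRows2 p).map (· - 1)) = _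
    rw [invRows2, List.map_map]
    congr 1
  have hrr : psi2Rows q = p.rows := by
    rw [psi2Rows, hqk, hmap, L2 t _ htlen ht_pos]
    have : j - 2 + 2 = j := by omega
    rw [this, htdef, hjdef]
    exact cons_head_tail p.rows hne
  have hcond : IsYD (psi2Rows q) := by rw [hrr]; exact ⟨p.sorted, p.pos⟩
  rw [psi2?, dif_pos hcond]
  exact congrArg some (ext' hrr)

lemma applyWord_concat (w : List ℕ) (a : ℕ) :
    applyWord (w ++ [a]) = (applyWord w).bind (step a) := by
  rw [applyWord, applyWord, List.foldlM_append]
  rcases h : List.foldlM (fun p a => step a p) emptyP w with _ | q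
  · rfl
  · show (some q >>= _) = _
    simp [List.foldlM]

lemma step_ne_empty {a : ℕ} {q p : YDPartition} (h : step a q = some p) : p.rows ≠ [] := by
  rw [step] at h
  split at h
  · have := (rho1_some h).1
    rw [this, rho1Rows]
    simp
  · have := psi2_some h
    rw [this, psi2Rows]
    simp

lemma empty_unique :
    ∃! w : List ℕ, (∀ a ∈ w, a = 1 ∨ a = 2) ∧ applyWord w = some emptyP := by
  refine ⟨[], ⟨by simp, rfl⟩, ?_⟩
  rintro w ⟨hw1, hw2⟩
  rcases List.eq_nil_or_concat w with rfl | ⟨L, b, rfl⟩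
  · rfl
  · rw [List.concat_eq_append, applyWord_concat] at hw2
    obtain ⟨q, _, hstep⟩ := Option.bind_eq_some_iff.mp hw2
    exact absurd rfl (step_ne_empty hstep)

lemma key : ∀ n : ℕ, ∀ p : YDPartition, p.size ≤ n →
    ∃! w : List ℕ, (∀ a ∈ w, a = 1 ∨ a = 2) ∧ applyWord w = some p := by
  intro n
  induction n with
  | zero =>
    intro p hp
    have : p.rows = [] := by
      rcases hc : p.rows with _ | ⟨a, t⟩
      · rfl
      · have : 0 < a := p.pos a (by rw [hc]; simp)
        have : a + t.sum ≤ 0 := by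
          rw [size, hc] at hp; simpa using hp
        omega
    rw [ext' this (q := emptyP)]
    exact empty_unique
  | succ n ih =>
    intro p hp
    by_cases hne : p.rows = []
    · rw [ext' hne (q := emptyP)]
      exact empty_unique
    by_cases hjk : p.rowLen ≤ p.colHeight
    · obtain ⟨q, hq⟩ := rho1_exists p hne hjk
      obtain ⟨_, hsz, hinv⟩ := rho1_shape hq
      obtain ⟨w, ⟨hw1, hw2⟩, hwu⟩ := ih q (by omega)
      refine ⟨w ++ [1], ⟨?_, ?_⟩, ?_⟩
      · intro a ha
        rcases List.mem_append.mp ha with h | h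
        · exact hw1 a h
        · left; simpa using h
      · rw [applyWord_concat, hw2]
        show step 1 q = some p
        rw [step, if_pos rfl]
        exact hq
      · rintro v ⟨hv1, hv2⟩
        rcases List.eq_nil_or_concat v with rfl | ⟨L, b, rfl⟩
        · exact absurd (Option.some.inj hv2).symm (fun h => hne (by rw [h]; rfl))
        rw [List.concat_eq_append] at *
        rw [applyWord_concat] at hv2
        obtain ⟨q', hq'1, hq'2⟩ := Option.bind_eq_some_iff.mp hv2
        have hb : b = 1 := by
          rcases hv1 b (by simp) with rfl | rfl
          · rfl
          · rw [step, if_neg (by omega)] at hq'2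
            have := (psi2_shape hq'2).1
            omega
        subst hb
        rw [step, if_pos rfl] at hq'2
        have hqq : q' = q := ext' ((rho1_shape hq'2).2.2.trans hinv.symm)
        subst hqq
        have : L = w := hwu L ⟨fun a ha => hv1 a (by simp [ha]), hq'1⟩
        rw [this]
    · push_neg at hjk
      obtain ⟨q, hq⟩ := psi2_exists p hne hjk
      obtain ⟨_, hsz, hinv⟩ := psi2_shape hq
      obtain ⟨w, ⟨hw1, hw2⟩, hwu⟩ := ih q (by omega)
      refine ⟨w ++ [2], ⟨?_, ?_⟩, ?_⟩
      · intro a ha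
        rcases List.mem_append.mp ha with h | h
        · exact hw1 a h
        · right; simpa using h
      · rw [applyWord_concat, hw2]
        show step 2 q = some p
        rw [step, if_neg (by omega)]
        exact hq
      · rintro v ⟨hv1, hv2⟩
        rcases List.eq_nil_or_concat v with rfl | ⟨L, b, rfl⟩
        · exact absurd (Option.some.inj hv2).symm (fun h => hne (by rw [h]; rfl))
        rw [List.concat_eq_append] at *
        rw [applyWord_concat] at hv2
        obtain ⟨q', hq'1, hq'2⟩ := Option.bind_eq_some_iff.mp hv2
        have hb : b = 2 := by
          rcases hv1 b (by simp) with rfl | rfl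
          · rw [step, if_pos rfl] at hq'2
            have := (rho1_shape hq'2).1
            omega
          · rfl
        subst hb
        rw [step, if_neg (by omega)] at hq'2
        have hqq : q' = q := ext' ((psi2_shape hq'2).2.2.trans hinv.symm)
        subst hqq
        have : L = w := hwu L ⟨fun a ha => hv1 a (by simp [ha]), hq'1⟩
        rw [this]

end YDPartition

open YDPartition in
/-- every partition can be written uniquely as a finite sequence of
the operations `ρ₁` and `ψ₂` applied to the empty partition (`1` standing for
`ρ₁` and `2` for `ψ₂`, the leftmost entry applied first). -/
theorem unique_dyson_decomposition (p : YDPartition) :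
    ∃! w : List ℕ, (∀ a ∈ w, a = 1 ∨ a = 2) ∧ applyWord w = some p := by
  exact YDPartition.key p.size p le_rfl
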